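/- For all q, r ∈ Φ₂₄₀ there exist integers a, b such that 2⟪r,q⟫ = a + b·τ, and for this (unique) a one has r − a·q ∈ Φ₂₄₀. (Since every q ∈ Φ₂₄₀ has reduced squared norm (q,q)_τ = 1, the map r ↦ r − a·q is the reflection of r in the hyperplane orthogonal to q with respect to the reduced inner product; hence the 240 icosahedral pinors Φ₂₄₀ form a set closed under E₈ reflections, realizing the 240 roots of E₈.) -/

import Mathlib

noncomputable section

open RealInnerProductSpace

/-- The golden ratio `τ = (1+√5)/2`. -/
def τ : ℝ := (1 + Real.sqrt 5) / 2

/-- The Galois conjugate `σ = (1-√5)/2 = 1 - τ` of the golden ratio. -/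
def σ : ℝ := (1 - Real.sqrt 5) / 2

/-- The set of signs `{1, -1}`. -/
def Sgn : Set ℝ := {1, -1}

/-- The 120 roots of the `H₄` root system in Euclidean `ℝ⁴`:
the 8 permutations of `(±1,0,0,0)`, the 16 vectors `½(±1,±1,±1,±1)`, and the 96 even
coordinate permutations of `½(0,±1,±σ,±τ)` with all sign choices. -/
def ΦH4 : Set (EuclideanSpace ℝ (Fin 4)) :=
  {q | ∃ ε ∈ Sgn, ∃ m : Fin 4, ∀ l, q l = if l = m then ε else 0} ∪
  {q | ∃ ε : Fin 4 → ℝ, (∀ m, ε m ∈ Sgn) ∧ ∀ m, q m = ε m / 2} ∪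
  {q | ∃ π : Equiv.Perm (Fin 4), Equiv.Perm.sign π = 1 ∧
    ∃ ε : Fin 4 → ℝ, (∀ m, ε m ∈ Sgn) ∧ ∀ m, q m = ε m * ![0, 1, σ, τ] (π m) / 2}

/-- The 240 icosahedral pinors `Φ₂₄₀ = Φ_H4 ∪ τ·Φ_H4`, a set of 240 vectors in `ℝ⁴`. -/
def Φ240 : Set (EuclideanSpace ℝ (Fin 4)) := ΦH4 ∪ (fun v => τ • v) '' ΦH4

/-!
Write each coordinate of a vector of `Φ₂₄₀` as `(u + v τ) / 2` with `u, v ∈ ℤ`, so that the vector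
becomes some `w ∈ ℤ⁸`. Since `τ² = τ + 1`, one gets `2⟪x, y⟫ = (w·w' + (w·τw') τ) / 2` with the
standard dot product of `ℤ⁸`: the reduced inner product is a quarter of the dot product. In these
coordinates `Φ₂₄₀` is exactly the set of vectors of squared length `4` in the lattice
`L = {w ∈ ℤ⁸ | w mod 2 ∈ C}`, where `C` is a doubly even binary code, stable under `τ`. Doubly even
makes `L` even, so `a = w·w' / 2` is an integer, and `w - a w'` lies in `L` and has squared length
`4 - 4a² + 4a² = 4`. Both sets are invariant under changing the sign of a coordinate of `ℝ⁴`, so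
their equality is a finite check over 7⁴ sign representatives.
-/

lemma sq_modEq_emod_two_sq (x : ℤ) : x ^ 2 ≡ (x % 2) ^ 2 [ZMOD 4] := by
  rw [Int.modEq_iff_dvd]
  exact ⟨-((x / 2) ^ 2 + x / 2 * (x % 2)),
    by linear_combination (x + 2 * (x / 2) + x % 2) * Int.mul_ediv_add_emod x 2⟩

lemma forall_of_forall_mem_fin_four {α : Type*} {l : List α} {P : (Fin 4 → α) → Prop}
    (h : ∀ a ∈ l, ∀ b ∈ l, ∀ c ∈ l, ∀ d ∈ l, P ![a, b, c, d]) (w : Fin 4 → α)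
    (hw : ∀ m, w m ∈ l) : P w := by
  have hw' : w = ![w 0, w 1, w 2, w 3] := by ext m; fin_cases m <;> rfl
  rw [hw']
  exact h _ (hw 0) _ (hw 1) _ (hw 2) _ (hw 3)

lemma τ_sq : τ ^ 2 = τ + 1 := Real.goldenRatio_sq

lemma σ_eq_one_sub_τ : σ = 1 - τ := Real.one_sub_goldenConj.symm

def pairVal (p : ℤ × ℤ) : ℝ := p.1 + p.2 * τ

lemma pairVal_neg (p : ℤ × ℤ) : pairVal (-p) = -pairVal p := by
  simp only [pairVal, Prod.fst_neg, Prod.snd_neg, Int.cast_neg]; ring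

def toVec (w : Fin 4 → ℤ × ℤ) : EuclideanSpace ℝ (Fin 4) :=
  WithLp.toLp 2 fun m => pairVal (w m) / 2

@[simp] lemma toVec_apply (w : Fin 4 → ℤ × ℤ) (m : Fin 4) : toVec w m = pairVal (w m) / 2 := rfl

lemma toVec_sub_smul (w w' : Fin 4 → ℤ × ℤ) (a : ℤ) :
    toVec (w - a • w') = toVec w - (a : ℝ) • toVec w' := by
  ext m
  simp only [toVec_apply, pairVal, PiLp.sub_apply, PiLp.smul_apply, Pi.sub_apply, Pi.smul_apply,
    Prod.fst_sub, Prod.snd_sub, Prod.smul_fst, Prod.smul_snd, smul_eq_mul]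
  push_cast; ring

def mulτ (p : ℤ × ℤ) : ℤ × ℤ := (p.2, p.1 + p.2)

def divτ (p : ℤ × ℤ) : ℤ × ℤ := (p.2 - p.1, p.1)

lemma mulτ_neg (p : ℤ × ℤ) : mulτ (-p) = -mulτ p := by
  simp only [mulτ, Prod.fst_neg, Prod.snd_neg, Prod.neg_mk, neg_add]

lemma divτ_neg (p : ℤ × ℤ) : divτ (-p) = -divτ p := by
  simp only [divτ, Prod.fst_neg, Prod.snd_neg, Prod.neg_mk, neg_sub_neg, neg_sub]

lemma mulτ_divτ (p : ℤ × ℤ) : mulτ (divτ p) = p := by simp [mulτ, divτ]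

lemma divτ_mulτ (p : ℤ × ℤ) : divτ (mulτ p) = p := by simp [mulτ, divτ]

lemma toVec_mulτ (w : Fin 4 → ℤ × ℤ) : toVec (mulτ ∘ w) = τ • toVec w := by
  ext m
  simp only [toVec_apply, pairVal, Function.comp_apply, mulτ, PiLp.smul_apply, smul_eq_mul]
  push_cast
  linear_combination -((w m).2 : ℝ) / 2 * τ_sq

def SignedEq (w c : Fin 4 → ℤ × ℤ) : Prop := ∀ m, w m = c m ∨ w m = -c m

instance (w c : Fin 4 → ℤ × ℤ) : Decidable (SignedEq w c) :=
  inferInstanceAs (Decidable (∀ m, w m = c m ∨ w m = -c m))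

lemma SignedEq.trans {w w' c : Fin 4 → ℤ × ℤ} (h : SignedEq w w') (h' : SignedEq w' c) :
    SignedEq w c := by
  intro m
  rcases h m with h | h <;> rcases h' m with h' | h' <;> simp [h, h']

lemma SignedEq.comp {w c : Fin 4 → ℤ × ℤ} (h : SignedEq w c) {f : ℤ × ℤ → ℤ × ℤ}
    (hf : ∀ p, f (-p) = -f p) : SignedEq (f ∘ w) (f ∘ c) := by
  intro m
  rcases h m with h | h <;> simp [h, hf]

lemma exists_sgn_mul_iff_signedEq (c : Fin 4 → ℤ × ℤ) (x : EuclideanSpace ℝ (Fin 4)) :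
    (∃ ε : Fin 4 → ℝ, (∀ m, ε m ∈ Sgn) ∧ ∀ m, x m = ε m * pairVal (c m) / 2) ↔
      ∃ w, SignedEq w c ∧ toVec w = x := by
  have coord : ∀ m, (∃ e ∈ Sgn, x m = e * pairVal (c m) / 2) ↔
      ∃ p, (p = c m ∨ p = -c m) ∧ x m = pairVal p / 2 := by
    intro m
    simp [Sgn, or_and_right, exists_or, pairVal_neg, neg_div]
  calc _ ↔ ∀ m, ∃ e ∈ Sgn, x m = e * pairVal (c m) / 2 := by
          simp only [← forall_and, Classical.skolem]
    _ ↔ ∀ m, ∃ p, (p = c m ∨ p = -c m) ∧ x m = pairVal p / 2 := forall_congr' coord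
    _ ↔ ∃ w, SignedEq w c ∧ toVec w = x := by
          simp only [Classical.skolem, SignedEq, forall_and, PiLp.ext_iff, toVec_apply, eq_comm]

def h4Pattern : Fin 4 → ℤ × ℤ := ![(0, 0), (1, 0), (1, -1), (0, 1)]

lemma pairVal_h4Pattern (j : Fin 4) : pairVal (h4Pattern j) = ![0, 1, σ, τ] j := by
  fin_cases j <;> simp [h4Pattern, pairVal, σ_eq_one_sub_τ, sub_eq_add_neg]

def IsH4Coord (w : Fin 4 → ℤ × ℤ) : Prop :=
  (∃ m, SignedEq w (Pi.single m (2, 0))) ∨ SignedEq w (fun _ => (1, 0)) ∨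
    ∃ π : Equiv.Perm (Fin 4), Equiv.Perm.sign π = 1 ∧ SignedEq w (h4Pattern ∘ π)

instance : DecidablePred IsH4Coord := fun _ => inferInstanceAs (Decidable (_ ∨ _ ∨ _))

lemma exists_sgn_single_iff_signedEq (m : Fin 4) (x : EuclideanSpace ℝ (Fin 4)) :
    (∃ ε ∈ Sgn, ∀ l, x l = if l = m then ε else 0) ↔
      ∃ w, SignedEq w (Pi.single m (2, 0)) ∧ toVec w = x := by
  have hc (ε : Fin 4 → ℝ) (l : Fin 4) :
      ε l * pairVal ((Pi.single m (2, 0) : Fin 4 → ℤ × ℤ) l) / 2 = if l = m then ε m else 0 := by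
    by_cases h : l = m <;> simp [h, pairVal]
  rw [← exists_sgn_mul_iff_signedEq]
  simp only [hc]
  constructor
  · rintro ⟨ε, hε, hx⟩
    exact ⟨fun _ => ε, fun _ => hε, hx⟩
  · rintro ⟨ε, hε, hx⟩
    exact ⟨ε m, hε m, hx⟩

lemma mem_ΦH4_iff (x : EuclideanSpace ℝ (Fin 4)) :
    x ∈ ΦH4 ↔ ∃ w, IsH4Coord w ∧ toVec w = x := by
  have h1 : (∃ ε ∈ Sgn, ∃ m, ∀ l, x l = if l = m then ε else 0) ↔
      ∃ m, ∃ w, SignedEq w (Pi.single m (2, 0)) ∧ toVec w = x := by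
    calc _ ↔ ∃ m, ∃ ε ∈ Sgn, ∀ l, x l = if l = m then ε else 0 :=
          ⟨fun ⟨ε, hε, m, h⟩ => ⟨m, ε, hε, h⟩, fun ⟨m, ε, hε, h⟩ => ⟨ε, hε, m, h⟩⟩
      _ ↔ _ := exists_congr fun m => exists_sgn_single_iff_signedEq m x
  have h2 : (∃ ε : Fin 4 → ℝ, (∀ m, ε m ∈ Sgn) ∧ ∀ m, x m = ε m / 2) ↔
      ∃ w, SignedEq w (fun _ => (1, 0)) ∧ toVec w = x := by
    rw [← exists_sgn_mul_iff_signedEq]; simp [pairVal]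
  have h3 (π : Equiv.Perm (Fin 4)) :
      (∃ ε : Fin 4 → ℝ, (∀ m, ε m ∈ Sgn) ∧ ∀ m, x m = ε m * ![0, 1, σ, τ] (π m) / 2) ↔
      ∃ w, SignedEq w (h4Pattern ∘ π) ∧ toVec w = x := by
    rw [← exists_sgn_mul_iff_signedEq]; simp [pairVal_h4Pattern]
  simp only [ΦH4, Set.mem_union, Set.mem_ofPred_eq, h1, h2, h3, IsH4Coord]
  simp only [or_and_right, exists_or, ← exists_and_right, or_assoc, ← exists_and_left, and_assoc]
  rw [@exists_comm (Fin 4), @exists_comm (Equiv.Perm (Fin 4))]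

def IsΦ240Coord (w : Fin 4 → ℤ × ℤ) : Prop := IsH4Coord w ∨ IsH4Coord (divτ ∘ w)

instance : DecidablePred IsΦ240Coord := fun _ => inferInstanceAs (Decidable (_ ∨ _))

lemma mem_Φ240_iff (x : EuclideanSpace ℝ (Fin 4)) :
    x ∈ Φ240 ↔ ∃ w, IsΦ240Coord w ∧ toVec w = x := by
  simp only [Φ240, Set.mem_union, Set.mem_image, mem_ΦH4_iff, IsΦ240Coord]
  constructor
  · rintro (⟨w, hw, rfl⟩ | ⟨_, ⟨w, hw, rfl⟩, rfl⟩)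
    · exact ⟨w, Or.inl hw, rfl⟩
    · refine ⟨mulτ ∘ w, Or.inr ?_, toVec_mulτ w⟩
      simpa [Function.comp_def, divτ_mulτ] using hw
  · rintro ⟨w, hw | hw, rfl⟩
    · exact Or.inl ⟨w, hw, rfl⟩
    · refine Or.inr ⟨_, ⟨_, hw, rfl⟩, ?_⟩
      rw [← toVec_mulτ, ← Function.comp_assoc]
      simp [Function.comp_def, mulτ_divτ]

def normSq (w : Fin 4 → ℤ × ℤ) : ℤ := ∑ m, ((w m).1 ^ 2 + (w m).2 ^ 2)

def dot (w w' : Fin 4 → ℤ × ℤ) : ℤ := ∑ m, ((w m).1 * (w' m).1 + (w m).2 * (w' m).2)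

lemma two_mul_inner_toVec (w w' : Fin 4 → ℤ × ℤ) :
    2 * ⟪toVec w, toVec w'⟫ = ((dot w w' : ℝ) + (dot w (mulτ ∘ w') : ℝ) * τ) / 2 := by
  simp only [PiLp.inner_apply, RCLike.inner_apply, conj_trivial, toVec_apply, pairVal, dot,
    Function.comp_apply, mulτ, Fin.sum_univ_four]
  push_cast
  linear_combination (((w 0).2 * (w' 0).2 + (w 1).2 * (w' 1).2 + (w 2).2 * (w' 2).2
    + (w 3).2 * (w' 3).2 : ℝ)) / 2 * τ_sq

lemma normSq_add (w w' : Fin 4 → ℤ × ℤ) :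
    normSq (w + w') = normSq w + 2 * dot w w' + normSq w' := by
  simp only [normSq, dot, Pi.add_apply, Prod.fst_add, Prod.snd_add, Fin.sum_univ_four]; ring

lemma normSq_sub_smul (w w' : Fin 4 → ℤ × ℤ) (a : ℤ) :
    normSq (w - a • w') = normSq w - 2 * a * dot w w' + a ^ 2 * normSq w' := by
  simp only [normSq, dot, Pi.sub_apply, Pi.smul_apply, Prod.fst_sub, Prod.snd_sub, Prod.smul_fst,
    Prod.smul_snd, smul_eq_mul, Fin.sum_univ_four]; ring

lemma SignedEq.normSq_eq {w c : Fin 4 → ℤ × ℤ} (h : SignedEq w c) : normSq w = normSq c := by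
  refine Finset.sum_congr rfl fun m _ => ?_
  rcases h m with h | h <;> simp [h]

/- Reading a pair `(u, v)` as `u + v τ` in `ℤ[τ]/2 = 𝔽₄`, the four checks say `∑ c_m = 0` and
`c₁ + τ² c₂ + τ c₃ = 0`; this lattice is Construction A of that code, a copy of `√2 E₈`. -/
def InE8Lattice (w : Fin 4 → ℤ × ℤ) : Prop :=
  2 ∣ ∑ m, (w m).1 ∧ 2 ∣ ∑ m, (w m).2 ∧ 2 ∣ (w 1).1 + (w 2).1 + (w 2).2 + (w 3).2 ∧
    2 ∣ (w 1).2 + (w 2).1 + (w 3).1 + (w 3).2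

instance : DecidablePred InE8Lattice := fun _ => inferInstanceAs (Decidable (_ ∧ _ ∧ _ ∧ _))

lemma InE8Lattice.sub_smul {w w' : Fin 4 → ℤ × ℤ} (h : InE8Lattice w) (h' : InE8Lattice w')
    (a : ℤ) : InE8Lattice (w - a • w') := by
  simp only [InE8Lattice, Fin.sum_univ_four, Pi.sub_apply, Pi.smul_apply, Prod.fst_sub,
    Prod.snd_sub, Prod.smul_fst, Prod.smul_snd, smul_eq_mul] at *
  obtain ⟨⟨k₁, h₁⟩, ⟨k₂, h₂⟩, ⟨k₃, h₃⟩, ⟨k₄, h₄⟩⟩ := h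
  obtain ⟨⟨l₁, h₁'⟩, ⟨l₂, h₂'⟩, ⟨l₃, h₃'⟩, ⟨l₄, h₄'⟩⟩ := h'
  exact ⟨⟨k₁ - a * l₁, by linear_combination h₁ - a * h₁'⟩,
    ⟨k₂ - a * l₂, by linear_combination h₂ - a * h₂'⟩,
    ⟨k₃ - a * l₃, by linear_combination h₃ - a * h₃'⟩,
    ⟨k₄ - a * l₄, by linear_combination h₄ - a * h₄'⟩⟩

lemma InE8Lattice.comp_mulτ {w : Fin 4 → ℤ × ℤ} (h : InE8Lattice w) :
    InE8Lattice (mulτ ∘ w) := by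
  simp only [InE8Lattice, Fin.sum_univ_four, Function.comp_apply, mulτ] at *
  omega

lemma SignedEq.inE8Lattice_iff {w c : Fin 4 → ℤ × ℤ} (h : SignedEq w c) :
    InE8Lattice w ↔ InE8Lattice c := by
  have hm : ∀ m, 2 ∣ (w m).1 + (c m).1 ∧ 2 ∣ (w m).2 + (c m).2 ∨
      (w m).1 = -(c m).1 ∧ (w m).2 = -(c m).2 := by
    intro m
    rcases h m with h | h <;> simp [h, ← two_mul]
  simp only [InE8Lattice, Fin.sum_univ_four]
  have := hm 0; have := hm 1; have := hm 2; have := hm 3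
  omega

lemma InE8Lattice.four_dvd_normSq {w : Fin 4 → ℤ × ℤ} (h : InE8Lattice w) : 4 ∣ normSq w := by
  set r : Fin 4 → ℤ × ℤ := fun m => ((w m).1 % 2, (w m).2 % 2)
  have hr : InE8Lattice r := by
    simp only [InE8Lattice, Fin.sum_univ_four, r] at h ⊢
    omega
  have hr_mem : ∀ m, r m ∈ [(0, 0), (0, 1), (1, 0), (1, 1)] := by
    intro m
    rcases Int.emod_two_eq_zero_or_one (w m).1 with h1 | h1 <;>
      rcases Int.emod_two_eq_zero_or_one (w m).2 with h2 | h2 <;> simp [r, h1, h2]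
  have hwr : normSq w ≡ normSq r [ZMOD 4] :=
    Int.ModEq.sum fun m _ => (sq_modEq_emod_two_sq _).add (sq_modEq_emod_two_sq _)
  -- every word of the code cut out by the parity checks has weight divisible by 4
  exact hwr.dvd_iff.2 <| forall_of_forall_mem_fin_four
    (P := fun r => InE8Lattice r → 4 ∣ normSq r) (by decide) r hr_mem hr

lemma InE8Lattice.two_dvd_dot {w w' : Fin 4 → ℤ × ℤ} (h : InE8Lattice w) (h' : InE8Lattice w') :
    2 ∣ dot w w' := by
  have hsum : InE8Lattice (w + w') := by simpa using h.sub_smul h' (-1)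
  have := normSq_add w w'
  have := h.four_dvd_normSq; have := h'.four_dvd_normSq; have := hsum.four_dvd_normSq
  omega

def IsE8Root (w : Fin 4 → ℤ × ℤ) : Prop := InE8Lattice w ∧ normSq w = 4

instance : DecidablePred IsE8Root := fun _ => inferInstanceAs (Decidable (_ ∧ _))

lemma IsE8Root.sub_smul {w w' : Fin 4 → ℤ × ℤ} (h : IsE8Root w) (h' : IsE8Root w') {a : ℤ}
    (ha : dot w w' = 2 * a) : IsE8Root (w - a • w') := by
  refine ⟨h.1.sub_smul h'.1 a, ?_⟩
  rw [normSq_sub_smul, ha, h.2, h'.2]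
  ring

lemma SignedEq.isE8Root_iff {w c : Fin 4 → ℤ × ℤ} (h : SignedEq w c) :
    IsE8Root w ↔ IsE8Root c := by
  rw [IsE8Root, IsE8Root, h.inE8Lattice_iff, h.normSq_eq]

lemma IsH4Coord.isE8Root_and_comp_mulτ {w : Fin 4 → ℤ × ℤ} (hw : IsH4Coord w) :
    IsE8Root w ∧ IsE8Root (mulτ ∘ w) := by
  have of_shape : ∀ c, SignedEq w c → IsE8Root c → IsE8Root (mulτ ∘ c) →
      IsE8Root w ∧ IsE8Root (mulτ ∘ w) := fun c h h₁ h₂ =>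
    ⟨h.isE8Root_iff.2 h₁, (h.comp mulτ_neg).isE8Root_iff.2 h₂⟩
  rcases hw with ⟨m, h⟩ | h | ⟨π, hπ, h⟩
  · exact of_shape _ h ((by decide : ∀ m : Fin 4, IsE8Root (Pi.single m (2, 0))) m)
      ((by decide : ∀ m : Fin 4, IsE8Root (mulτ ∘ Pi.single m (2, 0))) m)
  · exact of_shape _ h (by decide) (by decide)
  · exact of_shape _ h
      ((by decide : ∀ π : Equiv.Perm (Fin 4), Equiv.Perm.sign π = 1 →
        IsE8Root (h4Pattern ∘ π)) π hπ)
      ((by decide : ∀ π : Equiv.Perm (Fin 4), Equiv.Perm.sign π = 1 →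
        IsE8Root (mulτ ∘ h4Pattern ∘ π)) π hπ)

def rootReps : List (ℤ × ℤ) := [(0, 0), (1, 0), (0, 1), (1, 1), (1, -1), (2, 0), (0, 2)]

lemma exists_mem_rootReps (p : ℤ × ℤ) (hp : p.1 ^ 2 + p.2 ^ 2 ≤ 4) :
    ∃ d ∈ rootReps, p = d ∨ p = -d := by
  obtain ⟨u, v⟩ := p
  have hu : -2 ≤ u ∧ u ≤ 2 := by constructor <;> nlinarith [sq_nonneg v]
  have hv : -2 ≤ v ∧ v ≤ 2 := by constructor <;> nlinarith [sq_nonneg u]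
  obtain ⟨hu₁, hu₂⟩ := hu
  obtain ⟨hv₁, hv₂⟩ := hv
  interval_cases u <;> interval_cases v <;> simp_all [rootReps]

lemma IsE8Root.exists_signedEq_rootReps {w : Fin 4 → ℤ × ℤ} (h : IsE8Root w) :
    ∃ w₀, (∀ m, w₀ m ∈ rootReps) ∧ SignedEq w w₀ := by
  have hle (m : Fin 4) : (w m).1 ^ 2 + (w m).2 ^ 2 ≤ 4 :=
    h.2 ▸ Finset.single_le_sum (f := fun m => (w m).1 ^ 2 + (w m).2 ^ 2)
      (fun _ _ => by positivity) (Finset.mem_univ m)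
  choose w₀ hw₀ using fun m => exists_mem_rootReps (w m) (hle m)
  exact ⟨w₀, fun m => (hw₀ m).1, fun m => (hw₀ m).2⟩

lemma SignedEq.isH4Coord {w w₀ : Fin 4 → ℤ × ℤ} (h : SignedEq w w₀) (h₀ : IsH4Coord w₀) :
    IsH4Coord w := by
  rcases h₀ with ⟨m, h₀⟩ | h₀ | ⟨π, hπ, h₀⟩
  exacts [Or.inl ⟨m, h.trans h₀⟩, Or.inr (Or.inl (h.trans h₀)), Or.inr (Or.inr ⟨π, hπ, h.trans h₀⟩)]

lemma SignedEq.isΦ240Coord {w w₀ : Fin 4 → ℤ × ℤ} (h : SignedEq w w₀) (h₀ : IsΦ240Coord w₀) :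
    IsΦ240Coord w :=
  h₀.imp h.isH4Coord (h.comp divτ_neg).isH4Coord

lemma isΦ240Coord_iff_isE8Root (w : Fin 4 → ℤ × ℤ) : IsΦ240Coord w ↔ IsE8Root w := by
  constructor
  · rintro (hw | hw)
    · exact hw.isE8Root_and_comp_mulτ.1
    · simpa [Function.comp_def, mulτ_divτ] using hw.isE8Root_and_comp_mulτ.2
  · intro hw
    obtain ⟨w₀, hw₀, hsign⟩ := hw.exists_signedEq_rootReps
    exact hsign.isΦ240Coord <| forall_of_forall_mem_fin_four
      (P := fun w => IsE8Root w → IsΦ240Coord w) (by decide) w₀ hw₀ (hsign.isE8Root_iff.1 hw)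

/-- For all `q, r ∈ Φ₂₄₀` there are integers `a, b` with `2⟪r,q⟫ = a + b·τ`, and for this
`a` one has `r − a·q ∈ Φ₂₄₀`: since every `q ∈ Φ₂₄₀` has reduced squared norm 1, the map
`r ↦ r − a·q` is the reflection in the hyperplane orthogonal to `q` with respect to the
reduced inner product, so `Φ₂₄₀` is closed under `E₈` reflections, realizing the 240
roots of `E₈`. -/
theorem Phi240_closed_under_E8_reflections :
    ∀ q ∈ Φ240, ∀ r ∈ Φ240, ∃ a b : ℤ,
      2 * ⟪r, q⟫ = (a : ℝ) + (b : ℝ) * τ ∧ r - (a : ℝ) • q ∈ Φ240 := by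
  intro q hq r hr
  obtain ⟨w', hw', rfl⟩ := (mem_Φ240_iff q).1 hq
  obtain ⟨w, hw, rfl⟩ := (mem_Φ240_iff r).1 hr
  rw [isΦ240Coord_iff_isE8Root] at hw hw'
  obtain ⟨a, ha⟩ := hw.1.two_dvd_dot hw'.1
  obtain ⟨b, hb⟩ := hw.1.two_dvd_dot hw'.1.comp_mulτ
  refine ⟨a, b, ?_, ?_⟩
  · rw [two_mul_inner_toVec, ha, hb]
    push_cast
    ring
  · rw [← toVec_sub_smul, mem_Φ240_iff]
    exact ⟨_, (isΦ240Coord_iff_isE8Root _).2 (hw.sub_smul hw' ha), rfl⟩
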